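/- For every integer d > 0, ∑_{J ⊆ {1,...,d}} [ ∏_{i=1}^{m+1} (n_i − 1) ] · [ ∑_{i=1}^{m+1} n_i(n_i − 3)/2 ] · U_J = 0, where for each J the quantities m, n_1, ..., n_{m+1} are the block data of J and U_J = (d+1)! · n_{m+1} / (n_1! · n_2! ⋯ n_{m+1}!). -/

import Mathlib

open Finset Polynomial

/-- Block sizes of an index set `J ⊆,{1,…,d}`: differences of consecutive elements of
`{0} ∪ J ∪ {d+2}` in increasing order. -/
def blockSizes (d : ℕ) (J : Finset ℕ) : List ℕ :=
  let L := (insert 0 (insert (d + 2) J)).sort (· ≤ ·)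
  L.tail.zipWith (· - ·) L

/-- The rank of a set in a matroid: the supremum of cardinalities of independent subsets. -/
noncomputable def mrank {α : Type*} (M : Matroid α) (X : Set α) : ℕ :=
  sSup {n : ℕ | ∃ I, M.Indep I ∧ I ⊆ X ∧ I.ncard = n}

/-- A loopless matroid: every singleton of the ground set is independent. -/
def MLoopless {α : Type*} (M : Matroid α) : Prop := ∀ e ∈ M.E, M.Indep {e}

/-- `flagCount M J` : the number of chains of flats of `M` whose ranks are exactly
the elements of `J`, in increasing order. -/
noncomputable def flagCount {α : Type*} (M : Matroid α) (J : Finset ℕ) : ℕ :=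
  Nat.card {F : J → Set α // StrictMono F ∧ ∀ j : J, M.IsFlat (F j) ∧ mrank M (F j) = (j : ℕ)}

/-- The Chow polynomial of a matroid of rank `d+1`, via the Feichtner–Yuzvinsky
flag formula. -/
noncomputable def chowPoly {α : Type*} (M : Matroid α) (d : ℕ) : Polynomial ℝ :=
  ∑ J ∈ (Finset.Icc 1 d).powerset,
    (flagCount M J : ℝ) •
      ((X : Polynomial ℝ) ^ J.card *
        ((blockSizes d J).map (fun n => ∑ j ∈ Finset.range (n - 1), (X : Polynomial ℝ) ^ j)).prod)

/-- The number of descents of a permutation of `Fin n`. -/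
def descentCount {n : ℕ} (σ : Equiv.Perm (Fin n)) : ℕ :=
  (Finset.univ.filter fun i : Fin n =>
    ∃ h : (i : ℕ) + 1 < n, σ ⟨(i : ℕ) + 1, h⟩ < σ i).card

/-- The Eulerian number `A(n,k)`: the number of permutations of `{1,…,n}` with
exactly `k` descents. -/
def eulerian (n k : ℕ) : ℕ :=
  (Finset.univ.filter fun σ : Equiv.Perm (Fin n) => descentCount σ = k).card

/-- `U_J = (d+1)! · n_{m+1} / (n_1! ⋯ n_{m+1}!)`, the number of chains of flats of ranks `J`
in the Boolean matroid of rank `d+1`. -/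
noncomputable def boolFlagCount (d : ℕ) (J : Finset ℕ) : ℚ :=
  (Nat.factorial (d + 1) : ℚ) * ((blockSizes d J).getLastD 1 : ℚ) /
    (((blockSizes d J).map Nat.factorial).prod : ℚ)

/-!
With `w(n₁, …, n_{m+1}) = ∏ᵢ (nᵢ - 1) · n_{m+1} / ∏ᵢ nᵢ!`, the summand is `(d+1)! · w · Q`,
where `Q = ∑ᵢ nᵢ(nᵢ - 3)/2`. Removing the least element `j` of `J` splits off the first block
`n₁ = j` and, after shifting by `j`, leaves the blocks of a subset of `{1, …, d - j}`; since `w` is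
multiplicative in the blocks before the last one, this gives recursions in `d` for
`S(d) = ∑_J w` and `T(d) = ∑_J w · Q`. Together with the telescoping sums
`∑_{j ≤ M} (j - 1)/j! = 1 - 1/M!` and `∑_{j ≤ M} (j - 1)/j! · j(j - 3)/2 = -M(M - 1)/(2 · M!)`,
strong induction gives `S(d) = 1` and `T(d) = -[d = 0]`.
-/

open Nat

def adjDiffs (l : List ℕ) : List ℕ := l.tail.zipWith (· - ·) l

theorem adjDiffs_cons_cons (a b : ℕ) (t : List ℕ) :
    adjDiffs (a :: b :: t) = (b - a) :: adjDiffs (b :: t) := rfl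

theorem adjDiffs_map_add (j : ℕ) : ∀ l : List ℕ, adjDiffs (l.map (· + j)) = adjDiffs l
  | [] | [_] => rfl
  | a :: b :: t => by
    simpa only [List.map_cons, adjDiffs_cons_cons, Nat.add_sub_add_right, List.cons.injEq, true_and]
      using adjDiffs_map_add j (b :: t)

theorem blockSizes_eq_adjDiffs (d : ℕ) (J : Finset ℕ) :
    blockSizes d J = adjDiffs ((insert 0 (insert (d + 2) J)).sort (· ≤ ·)) := rfl

theorem sort_insert_zero {s : Finset ℕ} (h : 0 ∉ s) :
    (insert 0 s).sort (· ≤ ·) = 0 :: s.sort (· ≤ ·) :=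
  sort_insert _ (fun b _ => Nat.zero_le b) h

theorem blockSizes_empty (d : ℕ) : blockSizes d ∅ = [d + 2] := by
  rw [blockSizes_eq_adjDiffs, insert_empty, sort_insert_zero (by simp), sort_singleton]
  rfl

theorem blockSizes_ne_nil (d : ℕ) (J : Finset ℕ) : blockSizes d J ≠ [] := by
  have hcard : 1 < (insert 0 (insert (d + 2) J)).card :=
    one_lt_card.2 ⟨0, by simp, d + 2, by simp, by omega⟩
  rw [blockSizes_eq_adjDiffs, adjDiffs, ← List.length_pos_iff, List.length_zipWith,
    List.length_tail, length_sort]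
  omega

theorem blockSizes_insert_map_addRight {e j : ℕ} (hj : 1 ≤ j) (hje : j ≤ e) {K : Finset ℕ}
    (hK : K ⊆ Icc 1 (e - j)) :
    blockSizes e (insert j (K.map (addRightEmbedding j))) = j :: blockSizes (e - j) K := by
  have hK0 : 0 ∉ insert (e - j + 2) K := by
    simp only [mem_insert, not_or]
    exact ⟨by omega, fun h => by simpa using hK h⟩
  have hset : insert 0 (insert (e + 2) (insert j (K.map (addRightEmbedding j))))
      = insert 0 ((insert 0 (insert (e - j + 2) K)).map (addRightEmbedding j)) := by
    rw [map_insert, map_insert, addRightEmbedding_apply, addRightEmbedding_apply, zero_add,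
      show e - j + 2 + j = e + 2 by omega, insert_comm j]
  have hmono : StrictMonoOn (addRightEmbedding j) ↑(insert 0 (insert (e - j + 2) K)) :=
    fun _ _ _ _ h => by simpa using h
  rw [blockSizes_eq_adjDiffs, hset, sort_insert_zero (by simp; omega), ← hmono.map_finsetSort,
    blockSizes_eq_adjDiffs, sort_insert_zero hK0, List.map_cons, addRightEmbedding_apply,
    zero_add, adjDiffs_cons_cons, Nat.sub_zero, ← adjDiffs_map_add j (0 :: _), List.map_cons,
    zero_add]
  rfl

theorem Finset.powerset_map {α β : Type*} (f : α ↪ β) (s : Finset α) :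
    (s.map f).powerset = s.powerset.map (mapEmbedding f).toEmbedding := by
  ext t
  simp [subset_map_iff, eq_comm]

theorem sum_powerset_Icc_eq_add_sum_insert {M : Type*} [AddCommMonoid M] (F : Finset ℕ → M)
    (a b : ℕ) : ∑ J ∈ (Icc a b).powerset, F J
      = F ∅ + ∑ j ∈ Icc a b, ∑ J ∈ (Icc (j + 1) b).powerset, F (insert j J) := by
  induction h : b + 1 - a generalizing a with
  | zero => simp [show Icc a b = ∅ from Icc_eq_empty (by omega)]
  | succ n ih =>
    rw [← insert_Icc_add_one_left_eq_Icc (show a ≤ b by omega), sum_powerset_insert (by simp),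
      sum_insert (by simp), ih (a + 1) (by omega), add_assoc, add_comm (∑ j ∈ Icc (a + 1) b, _)]

theorem sum_powerset_Icc_blockSizes {M : Type*} [AddCommMonoid M] (F : List ℕ → M) (e : ℕ) :
    ∑ J ∈ (Icc 1 e).powerset, F (blockSizes e J)
      = F [e + 2] + ∑ j ∈ Icc 1 e, ∑ K ∈ (Icc 1 (e - j)).powerset, F (j :: blockSizes (e - j) K) := by
  rw [sum_powerset_Icc_eq_add_sum_insert, blockSizes_empty]
  congr 1
  refine sum_congr rfl fun j hj => ?_
  obtain ⟨hj1, hje⟩ := mem_Icc.1 hj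
  have hshift : Icc (j + 1) e = (Icc 1 (e - j)).map (addRightEmbedding j) := by
    rw [map_add_right_Icc, add_comm, Nat.sub_add_cancel hje]
  rw [hshift, powerset_map, sum_map]
  exact sum_congr rfl fun K hK =>
    congrArg F (blockSizes_insert_map_addRight hj1 hje (mem_powerset.1 hK))

theorem sum_Icc_sub_one_div_factorial : ∀ M : ℕ,
    ∑ j ∈ Icc 1 M, ((j : ℚ) - 1) / j ! = 1 - 1 / M !
  | 0 => by simp
  | M + 1 => by
    rw [sum_Icc_succ_top (by omega), sum_Icc_sub_one_div_factorial M]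
    push_cast [factorial_succ]
    field_simp
    ring

theorem sum_Icc_sub_one_div_factorial_mul : ∀ M : ℕ,
    ∑ j ∈ Icc 1 M, ((j : ℚ) - 1) / j ! * ((j : ℚ) * (j - 3) / 2) = -M * (M - 1) / (2 * M !)
  | 0 => by simp
  | M + 1 => by
    rw [sum_Icc_succ_top (by omega), sum_Icc_sub_one_div_factorial_mul M]
    push_cast [factorial_succ]
    field_simp
    ring

noncomputable def blockWeight (l : List ℕ) : ℚ :=
  (l.map fun n : ℕ => (n : ℚ) - 1).prod * (l.getLastD 1 : ℚ) / ((l.map Nat.factorial).prod : ℚ)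

noncomputable def blockQuadSum (l : List ℕ) : ℚ := (l.map fun n : ℕ => (n : ℚ) * (n - 3) / 2).sum

theorem blockWeight_cons (j : ℕ) {l : List ℕ} (hl : l ≠ []) :
    blockWeight (j :: l) = ((j : ℚ) - 1) / j ! * blockWeight l := by
  obtain ⟨a, t, rfl⟩ := List.exists_cons_of_ne_nil hl
  simp only [blockWeight, List.map_cons, List.prod_cons, List.getLastD_cons, cast_mul]
  ring

theorem blockQuadSum_cons (j : ℕ) (l : List ℕ) :
    blockQuadSum (j :: l) = (j : ℚ) * (j - 3) / 2 + blockQuadSum l := by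
  simp [blockQuadSum]

theorem blockWeight_singleton_add_two (e : ℕ) : blockWeight [e + 2] = 1 / e ! := by
  simp only [blockWeight, List.map_cons, List.map_nil, List.prod_cons, List.prod_nil,
    List.getLastD_cons, List.getLastD_nil, mul_one, factorial_succ]
  push_cast
  field_simp
  ring

theorem sum_blockWeight (e : ℕ) : ∑ J ∈ (Icc 1 e).powerset, blockWeight (blockSizes e J) = 1 := by
  induction e using Nat.strong_induction_on with
  | _ e ih =>
    have hinner : ∀ j ∈ Icc 1 e, ∑ K ∈ (Icc 1 (e - j)).powerset,
        blockWeight (j :: blockSizes (e - j) K) = ((j : ℚ) - 1) / j ! := fun j hj => by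
      obtain ⟨hj1, hje⟩ := mem_Icc.1 hj
      simp only [blockWeight_cons j (blockSizes_ne_nil _ _), ← mul_sum]
      rw [ih (e - j) (by omega), mul_one]
    rw [sum_powerset_Icc_blockSizes, sum_congr rfl hinner, sum_Icc_sub_one_div_factorial,
      blockWeight_singleton_add_two]
    ring

theorem blockWeight_mul_blockQuadSum_cons (j : ℕ) {l : List ℕ} (hl : l ≠ []) :
    blockWeight (j :: l) * blockQuadSum (j :: l) = ((j : ℚ) - 1) / j ! *
      (blockWeight l * blockQuadSum l + (j : ℚ) * (j - 3) / 2 * blockWeight l) := by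
  rw [blockWeight_cons j hl, blockQuadSum_cons]
  ring

theorem sum_blockWeight_mul_blockQuadSum (e : ℕ) :
    ∑ J ∈ (Icc 1 e).powerset, blockWeight (blockSizes e J) * blockQuadSum (blockSizes e J)
      = if e = 0 then -1 else 0 := by
  induction e using Nat.strong_induction_on with
  | _ e ih =>
    rcases Nat.eq_zero_or_pos e with rfl | he
    · rw [if_pos rfl, Icc_eq_empty (by omega), powerset_empty, sum_singleton, blockSizes_empty,
        blockWeight_singleton_add_two]
      norm_num [blockQuadSum]
    have hinner : ∀ j ∈ Icc 1 e, ∑ K ∈ (Icc 1 (e - j)).powerset,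
        blockWeight (j :: blockSizes (e - j) K) * blockQuadSum (j :: blockSizes (e - j) K)
          = ((j : ℚ) - 1) / j ! * ((j : ℚ) * (j - 3) / 2)
            + if j = e then -(((j : ℚ) - 1) / j !) else 0 := fun j hj => by
      obtain ⟨hj1, hje⟩ := mem_Icc.1 hj
      simp only [blockWeight_mul_blockQuadSum_cons j (blockSizes_ne_nil _ _), ← mul_sum,
        sum_add_distrib, sum_blockWeight, ih (e - j) (by omega)]
      split_ifs <;> first | omega | ring
    rw [if_neg he.ne', sum_powerset_Icc_blockSizes (fun l => blockWeight l * blockQuadSum l),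
      sum_congr rfl hinner, sum_add_distrib,
      sum_Icc_sub_one_div_factorial_mul, sum_ite_eq', if_pos (mem_Icc.2 ⟨he, le_rfl⟩),
      blockWeight_singleton_add_two]
    simp only [blockQuadSum, List.map_cons, List.map_nil, List.sum_cons, List.sum_nil]
    push_cast
    field_simp
    ring

/-- The Boolean identity:
`∑_{J ⊆ {1,…,d}} (∏ᵢ (nᵢ − 1)) · (∑ᵢ nᵢ(nᵢ−3)/2) · U_J = 0` for every `d > 0`. -/
theorem stmt18 (d : ℕ) (hd : 0 < d) :
    (∑ J ∈ (Finset.Icc 1 d).powerset,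
        ((blockSizes d J).map fun n => (n : ℚ) - 1).prod *
          ((blockSizes d J).map fun n => (n : ℚ) * ((n : ℚ) - 3) / 2).sum *
          boolFlagCount d J) = 0 := by
  have hsummand : ∀ J : Finset ℕ,
      ((blockSizes d J).map fun n => (n : ℚ) - 1).prod *
          ((blockSizes d J).map fun n => (n : ℚ) * ((n : ℚ) - 3) / 2).sum * boolFlagCount d J
        = (d + 1)! * (blockWeight (blockSizes d J) * blockQuadSum (blockSizes d J)) := fun J => by
    simp only [boolFlagCount, blockWeight, blockQuadSum, List.pure_def, List.bind_eq_flatMap,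
      ← List.map_eq_flatMap, List.map_map, Function.comp_def]
    ring
  rw [sum_congr rfl fun J _ => hsummand J, ← mul_sum, sum_blockWeight_mul_blockQuadSum,
    if_neg hd.ne', mul_zero]
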